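/- For every integer r ≥ 1, the number of ordered subsets (tuples without repetition, including the empty tuple) of an r-element set equals ∑_{k=0}^{r} (r choose k)·k!, and this sum equals ⌊r!·e⌋. -/

import Mathlib

/-!
A repetition-free list of length `k` is an embedding `Fin k ↪ α`, so an `n`-set has
`∑ₖ n.descFactorial k` of them. Reversing the sum, `∑ₖ n! / (n - k)! = n! ∑_{j ≤ n} 1 / j!`,
and `n! e` exceeds this integer by `n! ∑_{j > n} 1 / j! ≤ (n + 2) / (n + 1)²`, which is `< 1`
once `n ≥ 1`.
-/

open Finset Nat

section Counting

variable {α : Type*} [Fintype α]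

def nodupListOfEmbedding (p : Σ k : Fin (Fintype.card α + 1), (Fin k ↪ α)) :
    {l : List α // l.Nodup} :=
  ⟨List.ofFn p.2, List.nodup_ofFn.mpr p.2.injective⟩

theorem nodupListOfEmbedding_bijective :
    Function.Bijective (nodupListOfEmbedding (α := α)) := by
  constructor
  · rintro ⟨⟨k, hk⟩, f⟩ ⟨⟨k', hk'⟩, f'⟩ h
    obtain ⟨rfl, hf⟩ := Sigma.mk.inj_iff.mp (List.ofFn_inj'.mp (congrArg Subtype.val h))
    simpa using DFunLike.coe_injective (eq_of_heq hf)
  · rintro ⟨l, hl⟩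
    exact ⟨⟨⟨l.length, Nat.lt_succ_of_le hl.length_le_card⟩,
      ⟨l.get, List.nodup_iff_injective_get.mp hl⟩⟩, Subtype.ext (List.ofFn_get l)⟩

theorem card_nodup_list :
    Nat.card {l : List α // l.Nodup} =
      ∑ k ∈ range (Fintype.card α + 1), (Fintype.card α).descFactorial k := by
  rw [← Nat.card_eq_of_bijective _ nodupListOfEmbedding_bijective, Nat.card_eq_fintype_card,
    Fintype.card_sigma, Fin.sum_univ_eq_sum_range (fun k => Fintype.card (Fin k ↪ α))]
  simp only [Fintype.card_embedding_eq, Fintype.card_fin]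

end Counting

theorem sum_range_descFactorial_eq_factorial_mul (n : ℕ) :
    (∑ k ∈ range (n + 1), n.descFactorial k : ℝ) = n ! * ∑ j ∈ range (n + 1), 1 / (j ! : ℝ) := by
  rw [mul_sum, ← sum_range_reflect (fun j => (n ! : ℝ) * (1 / j !))]
  refine sum_congr rfl fun k hk => ?_
  have hkn : k ≤ n := Nat.lt_succ_iff.mp (mem_range.mp hk)
  rw [add_tsub_cancel_right, ← factorial_mul_descFactorial hkn]
  push_cast
  field_simp

theorem factorial_mul_exp_one_lt {n : ℕ} (hn : 1 ≤ n) :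
    (n ! : ℝ) * Real.exp 1 < (n ! : ℝ) * ∑ j ∈ range (n + 1), 1 / (j ! : ℝ) + 1 := by
  have htail := Real.exp_bound' zero_le_one le_rfl (Nat.succ_pos n)
  simp only [one_pow, one_mul] at htail
  have hsmall : (n ! : ℝ) * ((n.succ + 1) / (n.succ ! * n.succ)) < 1 := by
    have hn' : (1 : ℝ) ≤ n := by exact_mod_cast hn
    rw [factorial_succ]
    push_cast
    rw [mul_div_assoc', div_lt_one (by positivity)]
    nlinarith [mul_pos (by positivity : (0 : ℝ) < n !) (by nlinarith : (0 : ℝ) < n * n + n - 1)]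
  calc (n ! : ℝ) * Real.exp 1
      ≤ n ! * ∑ j ∈ range (n + 1), 1 / (j ! : ℝ) + n ! * ((n.succ + 1) / (n.succ ! * n.succ)) := by
        rw [← mul_add]; gcongr
    _ < n ! * ∑ j ∈ range (n + 1), 1 / (j ! : ℝ) + 1 := by gcongr

theorem floor_factorial_mul_exp_one {n : ℕ} (hn : 1 ≤ n) :
    ⌊(n ! : ℝ) * Real.exp 1⌋₊ = ∑ k ∈ range (n + 1), n.descFactorial k := by
  rw [Nat.floor_eq_iff (by positivity)]
  push_cast
  rw [sum_range_descFactorial_eq_factorial_mul]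
  refine ⟨mul_le_mul_of_nonneg_left ?_ (by positivity), factorial_mul_exp_one_lt hn⟩
  simpa using Real.sum_le_exp_of_nonneg zero_le_one (n + 1)

/-- For every integer `r ≥ 1`, the number of ordered subsets (tuples without repetition,
including the empty tuple) of an `r`-element set equals `∑_{k=0}^{r} (r choose k) * k!`,
and this sum equals `⌊r! * e⌋`. -/
theorem ordered_subsets_count (r : ℕ) (hr : 1 ≤ r) :
    Nat.card {l : List (Fin r) // l.Nodup} =
      ∑ k ∈ Finset.range (r + 1), r.choose k * Nat.factorial k ∧
    (∑ k ∈ Finset.range (r + 1), r.choose k * Nat.factorial k) =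
      Nat.floor ((Nat.factorial r : ℝ) * Real.exp 1) := by
  have hdesc : ∑ k ∈ range (r + 1), r.descFactorial k = ∑ k ∈ range (r + 1), r.choose k * k ! := by
    simp only [descFactorial_eq_factorial_mul_choose, Nat.mul_comm]
  refine ⟨?_, ?_⟩
  · rw [card_nodup_list, Fintype.card_fin, hdesc]
  · rw [floor_factorial_mul_exp_one hr, hdesc]
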